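/- Let (Jσ, Jτ, Jστ) ∈ D and set S = e^{−2(Jτ+Jστ)}, T = e^{−2(Jσ+Jστ)}, L = e^{−2(Jσ+Jτ)}. Then the three discriminant inequalities hold: (1 + L² − S² − T²)² ≥ 4(L − ST)², (1 + T² − S² − L²)² ≥ 4(T − SL)², and (1 + S² − T² − L²)² ≥ 4(S − TL)². Moreover 1 + T² − S² − L² ≥ 0, 1 + S² − T² − L² ≥ 0, T − SL > 0 and S − TL > 0. -/

import Mathlib

lemma tanh_formula (x : ℝ) :
    Real.tanh x = (1 - Real.exp (-2 * x)) / (1 + Real.exp (-2 * x)) := by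
  rw [Real.tanh_eq_sinh_div_cosh, Real.sinh_eq, Real.cosh_eq]
  have h1 : Real.exp (-2 * x) = Real.exp (-x) * Real.exp (-x) := by
    rw [← Real.exp_add]; ring_nf
  have h2 : Real.exp x * Real.exp (-x) = 1 := by
    rw [← Real.exp_add]; simp
  have hp1 : (0:ℝ) < Real.exp x + Real.exp (-x) := by positivity
  have hp2 : (0:ℝ) < 1 + Real.exp (-2 * x) := by positivity
  have h1' : Real.exp (-(2*x)) = Real.exp (-x) * Real.exp (-x) := by
    rw [← Real.exp_add]; ring_nf
  field_simp
  linear_combination (norm := ring_nf) 2 * Real.exp x * h1' + 2 * Real.exp (-x) * h2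

set_option maxHeartbeats 1000000 in
/-- For `(Jσ, Jτ, Jστ) ∈ D` and `S = e^{-2(Jτ+Jστ)}`, `T = e^{-2(Jσ+Jστ)}`,
`L = e^{-2(Jσ+Jτ)}`, the three discriminant inequalities hold, together with
`1 + T² - S² - L² ≥ 0`, `1 + S² - T² - L² ≥ 0`, `T - SL > 0` and `S - TL > 0`. -/
theorem stmt3 (Jσ Jτ Jστ : ℝ)
    (h1 : Jσ ≥ Jτ) (h2 : Jτ ≥ Jστ) (h3 : Jτ > 0)
    (h4 : Real.tanh Jστ > -(Real.tanh Jσ * Real.tanh Jτ))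
    (S T L : ℝ)
    (hS : S = Real.exp (-2 * (Jτ + Jστ)))
    (hT : T = Real.exp (-2 * (Jσ + Jστ)))
    (hL : L = Real.exp (-2 * (Jσ + Jτ))) :
    (1 + L ^ 2 - S ^ 2 - T ^ 2) ^ 2 ≥ 4 * (L - S * T) ^ 2 ∧
    (1 + T ^ 2 - S ^ 2 - L ^ 2) ^ 2 ≥ 4 * (T - S * L) ^ 2 ∧
    (1 + S ^ 2 - T ^ 2 - L ^ 2) ^ 2 ≥ 4 * (S - T * L) ^ 2 ∧
    1 + T ^ 2 - S ^ 2 - L ^ 2 ≥ 0 ∧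
    1 + S ^ 2 - T ^ 2 - L ^ 2 ≥ 0 ∧
    T - S * L > 0 ∧
    S - T * L > 0 := by
  set a := Real.exp (-2 * Jσ) with ha_def
  set b := Real.exp (-2 * Jτ) with hb_def
  set c := Real.exp (-2 * Jστ) with hc_def
  have ha : 0 < a := Real.exp_pos _
  have hb : 0 < b := Real.exp_pos _
  have hc : 0 < c := Real.exp_pos _
  have hab : a ≤ b := Real.exp_le_exp.2 (by linarith)
  have hbc : b ≤ c := Real.exp_le_exp.2 (by linarith)
  have hb1 : b < 1 := by
    rw [hb_def, show (1:ℝ) = Real.exp 0 by simp]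
    exact Real.exp_lt_exp.2 (by linarith)
  have ha1 : a < 1 := lt_of_le_of_lt hab hb1
  have hSbc : S = b * c := by rw [hS, hb_def, hc_def, ← Real.exp_add]; ring_nf
  have hTac : T = a * c := by rw [hT, ha_def, hc_def, ← Real.exp_add]; ring_nf
  have hLab : L = a * b := by rw [hL, ha_def, hb_def, ← Real.exp_add]; ring_nf
  -- key inequality from the tanh condition
  have key : c * (a + b) < 1 + a * b := by
    rw [tanh_formula, tanh_formula, tanh_formula] at h4
    rw [div_mul_div_comm, ← neg_div] at h4
    rw [gt_iff_lt, div_lt_div_iff₀ (by positivity) (by positivity)] at h4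
    nlinarith [h4]
  subst hSbc hTac hLab
  clear_value a b c
  have g0 : 0 < 1 + b * c + a * c + a * b := by positivity
  have g3 : 0 < 1 + a * b - a * c - b * c := by nlinarith [key]
  have g1 : 0 < 1 + b * c - a * c - a * b := by
    nlinarith [mul_nonneg hc.le (sub_nonneg.2 hab)]
  have g2 : 0 < 1 + a * c - b * c - a * b := by
    nlinarith [mul_nonneg ha.le (sub_nonneg.2 hbc)]
  have hP : 0 < (1 + b*c + a*c + a*b) * (1 + b*c - a*c - a*b) *
      (1 + a*c - b*c - a*b) * (1 + a*b - a*c - b*c) :=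
    mul_pos (mul_pos (mul_pos g0 g1) g2) g3
  refine ⟨?_, ?_, ?_, ?_, ?_, ?_, ?_⟩
  · have : (1 + (a*b)^2 - (b*c)^2 - (a*c)^2)^2 - 4*(a*b - b*c*(a*c))^2 =
        (1 + b*c + a*c + a*b) * (1 + b*c - a*c - a*b) *
        (1 + a*c - b*c - a*b) * (1 + a*b - a*c - b*c) := by ring
    linarith [hP, this]
  · have : (1 + (a*c)^2 - (b*c)^2 - (a*b)^2)^2 - 4*(a*c - b*c*(a*b))^2 =
        (1 + b*c + a*c + a*b) * (1 + b*c - a*c - a*b) *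
        (1 + a*c - b*c - a*b) * (1 + a*b - a*c - b*c) := by ring
    linarith [hP, this]
  · have : (1 + (b*c)^2 - (a*c)^2 - (a*b)^2)^2 - 4*(b*c - a*c*(a*b))^2 =
        (1 + b*c + a*c + a*b) * (1 + b*c - a*c - a*b) *
        (1 + a*c - b*c - a*b) * (1 + a*b - a*c - b*c) := by ring
    linarith [hP, this]
  · have : 1 + (a*c)^2 - (b*c)^2 - (a*b)^2 =
        ((1 + b*c + a*c + a*b) * (1 + a*c - b*c - a*b) +
         (1 + b*c - a*c - a*b) * (1 + a*b - a*c - b*c)) / 2 := by ring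
    nlinarith [mul_pos g0 g2, mul_pos g1 g3]
  · have : 1 + (b*c)^2 - (a*c)^2 - (a*b)^2 =
        ((1 + b*c + a*c + a*b) * (1 + b*c - a*c - a*b) +
         (1 + a*c - b*c - a*b) * (1 + a*b - a*c - b*c)) / 2 := by ring
    nlinarith [mul_pos g0 g1, mul_pos g2 g3]
  · have : a*c - b*c*(a*b) = a*c*(1-b)*(1+b) := by ring
    nlinarith [mul_pos (mul_pos (mul_pos ha hc) (sub_pos.2 hb1)) (by linarith : (0:ℝ) < 1+b)]
  · have : b*c - a*c*(a*b) = b*c*(1-a)*(1+a) := by ring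
    nlinarith [mul_pos (mul_pos (mul_pos hb hc) (sub_pos.2 ha1)) (by linarith : (0:ℝ) < 1+a)]
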